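/- arXiv:1010.4864 — 4 statements merged into one kernel-verified Lean document; each statement's English description precedes it below -/
import Mathlib

section
/- For any integer m ≥ 2 and any x in the unit interval which is irrational, with aₙ(x) = a₁(T_m^{n−1}(x)) and pₙ, qₙ defined from (aₖ(x)) by the standard recursions, one has x = (pₙ + (m−1) T_m^n(x) m^{aₙ} p_{n−1}) / (qₙ + (m−1) T_m^n(x) m^{aₙ} q_{n−1}) for every n ≥ 1. -/
/-- The Chan shift transformation `T_m`. -/
noncomputable def chanT (m : ℕ) (x : ℝ) : ℝ :=
  if x = 0 then 0
  else ((m:ℝ) ^ (Int.fract (Real.log (1/x) / Real.log m)) - 1) / ((m:ℝ) - 1)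

/-- The first digit `a₁(x) = ⌊log(1/x)/log m⌋`. -/
noncomputable def chanA (m : ℕ) (x : ℝ) : ℤ := ⌊Real.log (1/x) / Real.log m⌋

/-!
With `L = log_m (1/y)`, the digit is `⌊L⌋` and `1 + (m-1) T_m y = m ^ fract L`, so
`1/y = m ^ a₁(y) * (1 + (m-1) T_m y)`. Irrationality keeps every iterate `T_m^n x` irrational, hence
positive. Substituting `1/yₙ` in terms of `yₙ₊₁ = T_m yₙ` multiplies numerator and denominator of the
`n`-th expression by the same nonzero factor and turns it into the `(n+1)`-st one.
-/

section ChanMap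

variable {m : ℕ} {y : ℝ}

lemma one_add_mul_chanT (hm : 1 < m) (hy : y ≠ 0) :
    1 + ((m : ℝ) - 1) * chanT m y = (m : ℝ) ^ Int.fract (Real.log (1 / y) / Real.log m) := by
  have hm1 : (m : ℝ) - 1 ≠ 0 := sub_ne_zero.mpr (by exact_mod_cast hm.ne')
  rw [chanT, if_neg hy]
  field_simp
  ring

lemma zpow_chanA_mul_one_add_mul_chanT (hm : 1 < m) (hy : 0 < y) :
    (m : ℝ) ^ chanA m y * (1 + ((m : ℝ) - 1) * chanT m y) = 1 / y := by
  have hm' : (1 : ℝ) < m := by exact_mod_cast hm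
  rw [one_add_mul_chanT hm hy.ne', chanA, ← Real.rpow_intCast, ← Real.rpow_add (by positivity),
    Int.floor_add_fract]
  exact Real.rpow_logb (by positivity) hm'.ne' (by positivity)

lemma irrational_chanT (hm : 1 < m) (hy : 0 < y) (hirr : Irrational y) :
    Irrational (chanT m y) := by
  rintro ⟨r, hr⟩
  have hy' : y = ((m : ℝ) ^ chanA m y * (1 + ((m : ℝ) - 1) * chanT m y))⁻¹ := by
    rw [zpow_chanA_mul_one_add_mul_chanT hm hy, one_div, inv_inv]
  refine hirr ⟨((m : ℚ) ^ chanA m y * (1 + ((m : ℚ) - 1) * r))⁻¹, ?_⟩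
  rw [← hr] at hy'
  push_cast
  exact hy'.symm

lemma chanT_pos (hm : 1 < m) (hy : 0 < y) (hirr : Irrational y) : 0 < chanT m y := by
  have hm' : (0 : ℝ) < m - 1 := by rw [sub_pos]; exact_mod_cast hm
  have hpow : 1 ≤ (m : ℝ) ^ Int.fract (Real.log (1 / y) / Real.log m) :=
    Real.one_le_rpow (by linarith) (Int.fract_nonneg _)
  have hnonneg : 0 ≤ chanT m y :=
    nonneg_of_mul_nonneg_right (by linarith [one_add_mul_chanT hm hy.ne']) hm'
  exact hnonneg.lt_of_ne (irrational_chanT hm hy hirr).ne_zero.symm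

lemma chanT_iterate_pos_irrational (hm : 1 < m) (hy : 0 < y) (hirr : Irrational y) (n : ℕ) :
    0 < (chanT m)^[n] y ∧ Irrational ((chanT m)^[n] y) := by
  induction n with
  | zero => exact ⟨hy, hirr⟩
  | succ n ih =>
    rw [Function.iterate_succ_apply']
    exact ⟨chanT_pos hm ih.1 ih.2, irrational_chanT hm ih.1 ih.2⟩

end ChanMap

lemma eq_div_convergent_succ {x k u v y y' P₀ P₁ Q₀ Q₁ : ℝ} (hy : y ≠ 0)
    (hy' : v * (1 + k * y') = 1 / y)
    (h : x = (P₁ + k * y * u * P₀) / (Q₁ + k * y * u * Q₀)) :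
    x = ((v * P₁ + k * u * P₀) + k * y' * v * P₁) / ((v * Q₁ + k * u * Q₀) + k * y' * v * Q₁) := by
  have hc : v * (1 + k * y') ≠ 0 := by rw [hy']; exact one_div_ne_zero hy
  have hyc : y * (v * (1 + k * y')) = 1 := by rw [hy']; field_simp
  have scale : ∀ A₀ A₁ : ℝ, (v * A₁ + k * u * A₀) + k * y' * v * A₁
      = v * (1 + k * y') * (A₁ + k * y * u * A₀) := by
    intro A₀ A₁
    linear_combination (-(k * u * A₀)) * hyc
  rw [scale, scale, mul_div_mul_left _ _ hc]
  exact h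

theorem chan_x_in_terms_of_convergents_general (m : ℕ) (hm : 2 ≤ m) (x : ℝ)
    (hx : x ∈ Set.Ioo (0:ℝ) 1) (hirr : Irrational x)
    (a : ℕ → ℤ)
    (ha : ∀ n, 1 ≤ n → a n = chanA m ((chanT m)^[n-1] x))
    (p q : ℕ → ℝ) (hp0 : p 0 = 0) (hp1 : p 1 = 1) (hq0 : q 0 = 1)
    (hq1 : q 1 = (m:ℝ) ^ (a 1) * q 0)
    (hp : ∀ n, 2 ≤ n →
      p n = (m:ℝ) ^ (a n) * p (n-1) + ((m:ℝ) - 1) * (m:ℝ) ^ (a (n-1)) * p (n-2))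
    (hq : ∀ n, 2 ≤ n →
      q n = (m:ℝ) ^ (a n) * q (n-1) + ((m:ℝ) - 1) * (m:ℝ) ^ (a (n-1)) * q (n-2)) :
    ∀ n, 1 ≤ n →
      x = (p n + ((m:ℝ) - 1) * ((chanT m)^[n] x) * (m:ℝ) ^ (a n) * p (n-1)) /
            (q n + ((m:ℝ) - 1) * ((chanT m)^[n] x) * (m:ℝ) ^ (a n) * q (n-1)) := by
  have hm1 : 1 < m := by omega
  have hiter := chanT_iterate_pos_irrational hm1 hx.1 hirr
  have hdigit : ∀ n, (m : ℝ) ^ a (n + 1) * (1 + ((m : ℝ) - 1) * (chanT m)^[n + 1] x)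
      = 1 / (chanT m)^[n] x := by
    intro n
    rw [ha (n + 1) (by omega), Nat.add_sub_cancel, Function.iterate_succ_apply']
    exact zpow_chanA_mul_one_add_mul_chanT hm1 (hiter n).1
  intro n hn
  induction n, hn using Nat.le_induction with
  | base =>
    calc x = 1 / (1 / (chanT m)^[0] x) := (one_div_one_div x).symm
      _ = _ := by rw [← hdigit 0, hp1, hp0, hq1, hq0]; ring
  | succ n _ ih =>
    rw [hp (n + 1) (by omega), hq (n + 1) (by omega), Nat.add_sub_cancel,
      show n + 1 - 2 = n - 1 by omega]
    exact eq_div_convergent_succ (hiter n).1.ne' (hdigit n) ih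

theorem chan_x_in_terms_of_convergents (m : ℕ) (hm : 2 ≤ m) (x : ℝ)
    (hx : x ∈ Set.Ioo (0:ℝ) 1) (hirr : Irrational x)
    (a : ℕ → ℤ) (ha0 : a 0 = 0)
    (ha : ∀ n, 1 ≤ n → a n = chanA m ((chanT m)^[n-1] x))
    (p q : ℕ → ℝ) (hp0 : p 0 = 0) (hp1 : p 1 = 1) (hq0 : q 0 = 1)
    (hq1 : q 1 = (m:ℝ) ^ (a 1) * q 0)
    (hp : ∀ n, 2 ≤ n →
      p n = (m:ℝ) ^ (a n) * p (n-1) + ((m:ℝ) - 1) * (m:ℝ) ^ (a (n-1)) * p (n-2))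
    (hq : ∀ n, 2 ≤ n →
      q n = (m:ℝ) ^ (a n) * q (n-1) + ((m:ℝ) - 1) * (m:ℝ) ^ (a (n-1)) * q (n-2)) :
    ∀ n, 1 ≤ n →
      x = (p n + ((m:ℝ) - 1) * ((chanT m)^[n] x) * (m:ℝ) ^ (a n) * p (n-1)) /
            (q n + ((m:ℝ) - 1) * ((chanT m)^[n] x) * (m:ℝ) ^ (a n) * q (n-1)) :=
  chan_x_in_terms_of_convergents_general m hm x hx hirr a ha p q hp0 hp1 hq0 hq1 hp hq
end

section
/- For any integer m ≥ 2 and any interval (c,d) ⊆ (0,1), the extended measure γ̄_m satisfies γ̄_m of the image under T̄_m of (m^{−(i+1)}, m^{−i}) × (c,d) equals γ̄_m((m^{−(i+1)}, m^{−i}) × (c,d)), for every i ∈ ℕ; concretely, ∫₀¹ ∫_{m^{−i}/(1+(m−1)d)}^{m^{−i}/(1+(m−1)c)} dy dx/(1+(m−1)(x+y))² = ∫_{m^{−(i+1)}}^{m^{−i}} ∫_c^d dy dx/(1+(m−1)(x+y))². -/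
/-!
Integrating `1 / (1 + k (x + y))²` twice, the mass of a rectangle `[a, b] × [c, d]` is `log ρ / k²`,
where `ρ = cornerRatio k a b c d` is the cross ratio of `1 + k (x + y)` at the four corners.
For `k = m - 1`, each corner factor of the image rectangle under `T̄_m` is a corner factor of the
source rectangle (with `m^{-i} = m · m^{-(i+1)}`) times `m` or `1 / (1 + (m - 1) y)`, and these
extra factors cancel in `ρ`.
-/

open Real Set intervalIntegral

noncomputable def cornerRatio (k a b c d : ℝ) : ℝ :=
  (1 + k * (a + d)) * (1 + k * (b + c)) / ((1 + k * (a + c)) * (1 + k * (b + d)))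

section AffineKernel

variable {k a b c d : ℝ}

theorem integral_one_div_one_add_mul_add_sq {x : ℝ} (hk : k ≠ 0)
    (h : ∀ y ∈ uIcc c d, 1 + k * (x + y) ≠ 0) :
    ∫ y in c..d, 1 / (1 + k * (x + y)) ^ 2
      = 1 / (k * (1 + k * (x + c))) - 1 / (k * (1 + k * (x + d))) := by
  have hderiv : ∀ y ∈ uIcc c d,
      HasDerivAt (fun y => -(k * (1 + k * (x + y)))⁻¹) (1 / (1 + k * (x + y)) ^ 2) y := by
    intro y hy
    have hlin : HasDerivAt (fun y => k * (1 + k * (x + y))) (k * k) y := by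
      simpa using ((((hasDerivAt_id y).const_add x).const_mul k).const_add 1).const_mul k
    refine (hlin.inv (mul_ne_zero hk (h y hy))).neg.congr_deriv ?_
    field_simp
  have hcont : ContinuousOn (fun y => 1 / (1 + k * (x + y)) ^ 2) (uIcc c d) :=
    continuousOn_const.div (by fun_prop) fun y hy => pow_ne_zero 2 (h y hy)
  rw [integral_eq_sub_of_hasDerivAt hderiv hcont.intervalIntegrable]
  ring

theorem integral_one_div_mul_one_add_mul_add {s : ℝ} (hk : k ≠ 0)
    (h : ∀ x ∈ uIcc a b, 1 + k * (x + s) ≠ 0) :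
    ∫ x in a..b, 1 / (k * (1 + k * (x + s)))
      = (log (1 + k * (b + s)) - log (1 + k * (a + s))) / k ^ 2 := by
  have hderiv : ∀ x ∈ uIcc a b,
      HasDerivAt (fun x => log (1 + k * (x + s)) / k ^ 2) (1 / (k * (1 + k * (x + s)))) x := by
    intro x hx
    have hlin : HasDerivAt (fun x => 1 + k * (x + s)) k x := by
      simpa using (((hasDerivAt_id x).add_const s).const_mul k).const_add 1
    refine ((hlin.log (h x hx)).div_const (k ^ 2)).congr_deriv ?_
    field_simp
  have hcont : ContinuousOn (fun x => 1 / (k * (1 + k * (x + s)))) (uIcc a b) :=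
    continuousOn_const.div (by fun_prop) fun x hx => mul_ne_zero hk (h x hx)
  rw [integral_eq_sub_of_hasDerivAt hderiv hcont.intervalIntegrable]
  ring

theorem integral_integral_one_div_one_add_mul_add_sq_eq_log_cornerRatio (hk : k ≠ 0)
    (h : ∀ x ∈ uIcc a b, ∀ y ∈ uIcc c d, 1 + k * (x + y) ≠ 0) :
    ∫ x in a..b, ∫ y in c..d, 1 / (1 + k * (x + y)) ^ 2 = log (cornerRatio k a b c d) / k ^ 2 := by
  have hc : ∀ x ∈ uIcc a b, 1 + k * (x + c) ≠ 0 := fun x hx => h x hx c left_mem_uIcc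
  have hd : ∀ x ∈ uIcc a b, 1 + k * (x + d) ≠ 0 := fun x hx => h x hx d right_mem_uIcc
  have hint : ∀ s, (∀ x ∈ uIcc a b, 1 + k * (x + s) ≠ 0) →
      IntervalIntegrable (fun x => 1 / (k * (1 + k * (x + s)))) MeasureTheory.volume a b :=
    fun s hs => (continuousOn_const.div (by fun_prop)
      fun x hx => mul_ne_zero hk (hs x hx)).intervalIntegrable
  rw [integral_congr fun x hx => integral_one_div_one_add_mul_add_sq hk (h x hx),
    integral_sub (hint c hc) (hint d hd), integral_one_div_mul_one_add_mul_add hk hc,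
    integral_one_div_mul_one_add_mul_add hk hd, cornerRatio,
    log_div (mul_ne_zero (hd a left_mem_uIcc) (hc b right_mem_uIcc))
      (mul_ne_zero (hc a left_mem_uIcc) (hd b right_mem_uIcc)),
    log_mul (hd a left_mem_uIcc) (hc b right_mem_uIcc),
    log_mul (hc a left_mem_uIcc) (hd b right_mem_uIcc)]
  ring

theorem one_add_mul_add_ne_zero_of_nonneg (hk : 0 ≤ k) (ha : 0 ≤ a) (hb : 0 ≤ b) (hc : 0 ≤ c)
    (hd : 0 ≤ d) : ∀ x ∈ uIcc a b, ∀ y ∈ uIcc c d, 1 + k * (x + y) ≠ 0 := by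
  intro x hx y hy
  have hxy : 0 ≤ x + y := add_nonneg ((le_inf ha hb).trans hx.1) ((le_inf hc hd).trans hy.1)
  positivity

end AffineKernel

theorem cornerRatio_natural_extension_image {m p c d : ℝ} (hm : m ≠ 0)
    (hc : 1 + (m - 1) * c ≠ 0) (hd : 1 + (m - 1) * d ≠ 0) :
    cornerRatio (m - 1) 0 1 (m * p / (1 + (m - 1) * d)) (m * p / (1 + (m - 1) * c))
      = cornerRatio (m - 1) p (m * p) c d := by
  have corner_zero : ∀ y, 1 + (m - 1) * y ≠ 0 →
      1 + (m - 1) * (0 + m * p / (1 + (m - 1) * y))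
        = (1 + (m - 1) * (m * p + y)) / (1 + (m - 1) * y) := by
    intro y hy
    field_simp
    ring
  have corner_one : ∀ y, 1 + (m - 1) * y ≠ 0 →
      1 + (m - 1) * (1 + m * p / (1 + (m - 1) * y))
        = m * (1 + (m - 1) * (p + y)) / (1 + (m - 1) * y) := by
    intro y hy
    field_simp
    ring
  rw [cornerRatio, cornerRatio, corner_zero c hc, corner_zero d hd, corner_one c hc,
    corner_one d hd]
  field_simp

theorem chan_natural_extension_preserves_general (m : ℕ) (hm : 2 ≤ m) (i : ℕ)
    (c d : ℝ) (hc : 0 < c) (hcd : c < d) :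
    (∫ x in (0:ℝ)..1, ∫ y in ((m:ℝ)^(-(i:ℤ)) / (1 + ((m:ℝ)-1)*d))..((m:ℝ)^(-(i:ℤ)) / (1 + ((m:ℝ)-1)*c)),
        1 / (1 + ((m:ℝ) - 1) * (x + y))^2) =
    ∫ x in ((m:ℝ)^(-((i:ℤ)+1)))..((m:ℝ)^(-(i:ℤ))), ∫ y in c..d,
        1 / (1 + ((m:ℝ) - 1) * (x + y))^2 := by
  have hk : 0 < (m:ℝ) - 1 := by
    have : (2:ℝ) ≤ m := by exact_mod_cast hm
    linarith
  have hq : (m:ℝ) ^ (-(i:ℤ)) = m * (m:ℝ) ^ (-((i:ℤ) + 1)) := by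
    rw [neg_add, zpow_add₀ (by positivity), zpow_neg_one]
    field_simp
  set p : ℝ := (m:ℝ) ^ (-((i:ℤ) + 1))
  have hp : 0 < p := by positivity
  have hkc : 0 < 1 + ((m:ℝ) - 1) * c := by positivity
  have hkd : 0 < 1 + ((m:ℝ) - 1) * d := by nlinarith
  rw [hq, integral_integral_one_div_one_add_mul_add_sq_eq_log_cornerRatio hk.ne'
      (one_add_mul_add_ne_zero_of_nonneg hk.le le_rfl zero_le_one
        (div_pos (by positivity) hkd).le (div_pos (by positivity) hkc).le),
    integral_integral_one_div_one_add_mul_add_sq_eq_log_cornerRatio hk.ne'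
      (one_add_mul_add_ne_zero_of_nonneg hk.le hp.le (by positivity) hc.le (hc.trans hcd).le),
    cornerRatio_natural_extension_image (by positivity) hkc.ne' hkd.ne']

theorem chan_natural_extension_preserves (m : ℕ) (hm : 2 ≤ m) (i : ℕ)
    (c d : ℝ) (hc : 0 < c) (hcd : c < d) (hd : d < 1) :
    (∫ x in (0:ℝ)..1, ∫ y in ((m:ℝ)^(-(i:ℤ)) / (1 + ((m:ℝ)-1)*d))..((m:ℝ)^(-(i:ℤ)) / (1 + ((m:ℝ)-1)*c)),
        1 / (1 + ((m:ℝ) - 1) * (x + y))^2) =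
    ∫ x in ((m:ℝ)^(-((i:ℤ)+1)))..((m:ℝ)^(-(i:ℤ))), ∫ y in c..d,
        1 / (1 + ((m:ℝ) - 1) * (x + y))^2 :=
  chan_natural_extension_preserves_general m hm i c d hc hcd
end

section
/- For any integer m ≥ 2 and every x ∈ [0,1], the weights P_i(x) = (m−1)m^{−(i+1)}(x+1)(x+m) / ((x+(m−1)m^{−i}+1)(x+(m−1)m^{−(i+1)}+1)), i ∈ ℕ, are nonnegative and sum to 1: ∑_{i=0}^∞ P_i(x) = 1. -/
/-- The weights `P_i(x)` of the Chan continued fraction. -/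
noncomputable def chanP (m : ℕ) (i : ℕ) (x : ℝ) : ℝ :=
  ((m:ℝ) - 1) * (m:ℝ)^(-((i:ℤ)+1)) * (x + 1) * (x + m) /
    ((x + ((m:ℝ) - 1) * (m:ℝ)^(-(i:ℤ)) + 1) * (x + ((m:ℝ) - 1) * (m:ℝ)^(-((i:ℤ)+1)) + 1))

/-!
The weights telescope: `P_i(x) = F(i+1) - F(i)` for
`F(i) = (x+1)(x+m) / ((m-1)(x + (m-1)m^{-i} + 1))`.
Since `m^{-i}` decreases to `0`, `F` increases from `F(0) = (x+1)/(m-1)` to `(x+m)/(m-1)`,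
so the weights are nonnegative and sum to `(x+m)/(m-1) - (x+1)/(m-1) = 1`.
-/

open Filter Topology

theorem Monotone.hasSum_sub_of_tendsto {f : ℕ → ℝ} (hf : Monotone f) {l : ℝ}
    (h : Tendsto f atTop (𝓝 l)) : HasSum (fun n => f (n + 1) - f n) (l - f 0) := by
  rw [hasSum_iff_tendsto_nat_of_nonneg fun n => sub_nonneg.2 (hf n.le_succ)]
  simp only [Finset.sum_range_sub]
  exact h.sub_const _

noncomputable def chanPotential (m : ℕ) (x : ℝ) (i : ℕ) : ℝ :=
  (x + 1) * (x + m) / ((m - 1) * (x + (m - 1) * (m : ℝ)⁻¹ ^ i + 1))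

section

variable {m : ℕ} {x : ℝ}

lemma chanP_eq_chanPotential_sub (hm : 1 < m) (hx : -1 < x) (i : ℕ) :
    chanP m i x = chanPotential m x (i + 1) - chanPotential m x i := by
  have hm1 : (1 : ℝ) < m := by exact_mod_cast hm
  have hzpow (k : ℕ) : (m : ℝ) ^ (-(k : ℤ)) = (m : ℝ)⁻¹ ^ k := by
    rw [zpow_neg, zpow_natCast, inv_pow]
  have hsucc : (m : ℝ)⁻¹ ^ i = m * (m : ℝ)⁻¹ ^ (i + 1) := by
    rw [pow_succ]
    field_simp
  unfold chanP chanPotential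
  rw [← Nat.cast_succ, hzpow, hzpow, hsucc]
  have ht : 0 < (m : ℝ)⁻¹ ^ (i + 1) := by positivity
  generalize (m : ℝ)⁻¹ ^ (i + 1) = t at ht
  have hq : (0 : ℝ) < m - 1 := by linarith
  have hd : 0 < x + (m - 1) * t + 1 := by
    have := mul_pos hq ht
    linarith
  have hd' : 0 < x + (m - 1) * (m * t) + 1 := by
    have := mul_pos hq (mul_pos (by linarith : (0 : ℝ) < m) ht)
    linarith
  rw [div_sub_div _ _ (by positivity) (by positivity),
    div_eq_div_iff (by positivity) (by positivity)]
  ring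

lemma chanPotential_monotone (hm : 1 < m) (hx : -1 < x) : Monotone (chanPotential m x) := by
  have hm1 : (1 : ℝ) < m := by exact_mod_cast hm
  refine monotone_nat_of_le_succ fun i => ?_
  have hle : (m : ℝ)⁻¹ ^ (i + 1) ≤ (m : ℝ)⁻¹ ^ i :=
    pow_le_pow_of_le_one (by positivity) (inv_le_one_of_one_le₀ hm1.le) i.le_succ
  have ht : 0 < (m : ℝ)⁻¹ ^ (i + 1) := by positivity
  have hq : (0 : ℝ) < m - 1 := by linarith
  have hK : 0 ≤ (x + 1) * (x + m) := by nlinarith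
  have hd : 0 < x + (m - 1) * (m : ℝ)⁻¹ ^ (i + 1) + 1 := by
    have := mul_pos hq ht
    linarith
  unfold chanPotential
  gcongr

lemma tendsto_chanPotential (hm : 1 < m) (hx : -1 < x) :
    Tendsto (chanPotential m x) atTop (𝓝 ((x + m) / (m - 1))) := by
  have hm1 : (1 : ℝ) < m := by exact_mod_cast hm
  have hx1 : x + 1 ≠ 0 := by linarith
  have hpow : Tendsto (fun i => (m : ℝ)⁻¹ ^ i) atTop (𝓝 0) :=
    tendsto_pow_atTop_nhds_zero_of_lt_one (by positivity) (inv_lt_one_of_one_lt₀ hm1)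
  have hden := (((hpow.const_mul ((m : ℝ) - 1)).const_add x).add_const 1).const_mul ((m : ℝ) - 1)
  rw [mul_zero, add_zero] at hden
  have := (tendsto_const_nhds (x := (x + 1) * (x + m))).div hden (mul_ne_zero (by linarith) hx1)
  rwa [mul_comm (m - 1 : ℝ), mul_div_mul_left _ _ hx1] at this

lemma chanPotential_zero (hm : 1 < m) (hx : -1 < x) :
    chanPotential m x 0 = (x + 1) / (m - 1) := by
  have hm1 : (1 : ℝ) < m := by exact_mod_cast hm
  unfold chanPotential
  rw [pow_zero, mul_one, show x + (m - 1) + 1 = x + m by ring]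
  exact mul_div_mul_right _ _ (by linarith)

lemma chanP_nonneg (hm : 1 < m) (hx : -1 < x) (i : ℕ) : 0 ≤ chanP m i x := by
  rw [chanP_eq_chanPotential_sub hm hx]
  exact sub_nonneg.2 (chanPotential_monotone hm hx i.le_succ)

lemma hasSum_chanP (hm : 1 < m) (hx : -1 < x) : HasSum (fun i => chanP m i x) 1 := by
  have hm1 : (1 : ℝ) < m := by exact_mod_cast hm
  have h := (chanPotential_monotone hm hx).hasSum_sub_of_tendsto (tendsto_chanPotential hm hx)
  rw [chanPotential_zero hm hx, ← sub_div, add_sub_add_left_eq_sub,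
    div_self (by linarith)] at h
  simpa only [chanP_eq_chanPotential_sub hm hx] using h

end

theorem chan_P_transition_probability (m : ℕ) (hm : 2 ≤ m) (x : ℝ)
    (hx : x ∈ Set.Icc (0:ℝ) 1) :
    (∀ i : ℕ, 0 ≤ chanP m i x) ∧ ∑' i : ℕ, chanP m i x = 1 := by
  have hx' : -1 < x := by linarith [hx.1]
  exact ⟨chanP_nonneg hm hx', (hasSum_chanP hm hx').tsum_eq⟩
end

section
/- For the function f with f(x) = 0 for 0 ≤ x ≤ 1/m and f(x) = 1 for 1/m < x ≤ 1, one has var(U_m f) = (m−1)(3m²−3m+1)/((2m−1)(m²+m−1)) while var(f) = 1, so the constant K_m in the variation bound for U_m is sharp. -/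
/-- The Perron–Frobenius operator `U_m`. -/
noncomputable def chanU (m : ℕ) (f : ℝ → ℝ) (x : ℝ) : ℝ :=
  ∑' i : ℕ, chanP m i (((m:ℝ) - 1) * x) * f ((m:ℝ)^(-(i:ℤ)) / (1 + ((m:ℝ) - 1) * x))

open Set

private lemma evar_sub_le (f g : ℝ → ℝ) (s : Set ℝ) :
    eVariationOn (f - g) s ≤ eVariationOn f s + eVariationOn g s := by
  apply iSup_le
  rintro ⟨n, ⟨u, hu, us⟩⟩
  calc ∑ i ∈ Finset.range n, edist ((f - g) (u (i+1))) ((f - g) (u i))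
      ≤ ∑ i ∈ Finset.range n,
          (edist (f (u (i+1))) (f (u i)) + edist (g (u (i+1))) (g (u i))) := by
        refine Finset.sum_le_sum fun i _ => ?_
        have := edist_add_add_le (f (u (i+1))) (-g (u (i+1))) (f (u i)) (-g (u i))
        simpa [sub_eq_add_neg] using this
    _ = (∑ i ∈ Finset.range n, edist (f (u (i+1))) (f (u i)))
        + ∑ i ∈ Finset.range n, edist (g (u (i+1))) (g (u i)) := Finset.sum_add_distrib
    _ ≤ eVariationOn f s + eVariationOn g s :=
        add_le_add (eVariationOn.sum_le (f := f) (n := n) hu us) (eVariationOn.sum_le (f := g) (n := n) hu us)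

private lemma real_edist (x y : ℝ) : edist x y = ENNReal.ofReal (|x - y|) := by
  rw [edist_dist, Real.dist_eq]

private lemma monotoneOn_evar {f : ℝ → ℝ} {a b : ℝ} (hab : a ≤ b)
    (hf : MonotoneOn f (Icc a b)) :
    eVariationOn f (Icc a b) = ENNReal.ofReal (f b - f a) := by
  have ha : a ∈ Icc a b := left_mem_Icc.2 hab
  have hb : b ∈ Icc a b := right_mem_Icc.2 hab
  apply le_antisymm
  · have := hf.eVariationOn_le ha hb
    simpa using this
  · have := eVariationOn.edist_le f ha hb
    rwa [real_edist, abs_sub_comm, abs_of_nonneg (sub_nonneg.2 (hf ha hb hab))] at this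

/-- Auxiliary: the Möbius function that `chanU m f` agrees with on `[0,1)`. -/
noncomputable def chanH (m : ℕ) (x : ℝ) : ℝ :=
  ((m:ℝ)-1)*(((m:ℝ)-1)*x+1) / ((m:ℝ)*((m:ℝ)-1)*x + (2*(m:ℝ)-1))

/-- Auxiliary: the jump part of `chanU m f`. -/
noncomputable def chanH2 (m : ℕ) (x : ℝ) : ℝ := if 1 ≤ x then chanH m 1 else 0

section
variable {m : ℕ} (hm : 2 ≤ m)
include hm

private lemma chanH_den_pos {x : ℝ} (hx : 0 ≤ x) :
    (0:ℝ) < (m:ℝ)*((m:ℝ)-1)*x + (2*(m:ℝ)-1) := by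
  have hM : (2:ℝ) ≤ (m:ℝ) := by exact_mod_cast hm
  have : (0:ℝ) ≤ (m:ℝ)*((m:ℝ)-1)*x :=
    mul_nonneg (mul_nonneg (by linarith) (by linarith)) hx
  linarith

private lemma chanH_mono : MonotoneOn (chanH m) (Icc (0:ℝ) 1) := by
  have hM : (2:ℝ) ≤ (m:ℝ) := by exact_mod_cast hm
  intro x hx y hy hxy
  rw [chanH, chanH, div_le_div_iff₀ (chanH_den_pos hm hx.1) (chanH_den_pos hm hy.1)]
  nlinarith [mul_nonneg (sub_nonneg.2 hxy) (pow_nonneg (by linarith : (0:ℝ) ≤ (m:ℝ)-1) 3)]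

private lemma chanH_nonneg {x : ℝ} (hx : 0 ≤ x) : 0 ≤ chanH m x := by
  have hM : (2:ℝ) ≤ (m:ℝ) := by exact_mod_cast hm
  refine div_nonneg ?_ (chanH_den_pos hm hx).le
  have : (0:ℝ) ≤ ((m:ℝ)-1)*x := mul_nonneg (by linarith) hx
  nlinarith

private lemma chanH2_mono : MonotoneOn (chanH2 m) (Icc (0:ℝ) 1) := by
  intro x _ y _ hxy
  unfold chanH2
  split_ifs with h1 h2 h2
  · exact le_rfl
  · exact absurd (h1.trans hxy) h2
  · exact chanH_nonneg hm zero_le_one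
  · exact le_rfl

private lemma chanH_one : chanH m 1 = ((m:ℝ)*((m:ℝ)-1)) / ((m:ℝ)^2+(m:ℝ)-1) := by
  rw [chanH]; congr 1 <;> ring

private lemma chanH_zero : chanH m 0 = ((m:ℝ)-1) / (2*(m:ℝ)-1) := by
  rw [chanH]; congr 1 <;> ring

private lemma chan_key : (chanH m 1 - chanH m 0) + chanH m 1 =
    ((m:ℝ) - 1) * (3*(m:ℝ)^2 - 3*(m:ℝ) + 1) / ((2*(m:ℝ) - 1) * ((m:ℝ)^2 + (m:ℝ) - 1)) := by
  have hM : (2:ℝ) ≤ (m:ℝ) := by exact_mod_cast hm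
  have d0 : (2*(m:ℝ)-1) ≠ 0 := by nlinarith
  have d2 : ((m:ℝ)^2 + (m:ℝ) - 1) ≠ 0 := by nlinarith
  rw [chanH_one hm, chanH_zero hm]
  rw [div_sub_div _ _ d2 d0, div_add_div _ _ (mul_ne_zero d2 d0) d2,
    div_eq_div_iff (mul_ne_zero (mul_ne_zero d2 d0) d2) (mul_ne_zero d0 d2)]
  ring

private lemma chanU_eqOn (f : ℝ → ℝ)
    (hf0 : ∀ x ∈ Set.Icc (0:ℝ) (1/(m:ℝ)), f x = 0)
    (hf1 : ∀ x ∈ Set.Ioc (1/(m:ℝ)) 1, f x = 1) :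
    EqOn (chanU m f) (chanH m - chanH2 m) (Icc 0 1) := by
  have hM : (2:ℝ) ≤ (m:ℝ) := by exact_mod_cast hm
  have hM0 : (0:ℝ) < m := by linarith
  have hM1 : (1:ℝ) ≤ m := by linarith
  intro x hx
  obtain ⟨hx0, hx1⟩ := hx
  have hD : (1:ℝ) ≤ 1 + ((m:ℝ) - 1) * x := by nlinarith
  have hD0 : (0:ℝ) < 1 + ((m:ℝ) - 1) * x := by linarith
  have hzero : ∀ i : ℕ, i ≠ 0 →
      chanP m i (((m:ℝ) - 1) * x) * f ((m:ℝ)^(-(i:ℤ)) / (1 + ((m:ℝ) - 1) * x)) = 0 := by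
    intro i hi
    have h1i : (1:ℤ) ≤ (i:ℤ) := by exact_mod_cast Nat.one_le_iff_ne_zero.2 hi
    have hp : (0:ℝ) < (m:ℝ)^(-(i:ℤ)) := zpow_pos hM0 _
    have hle : (m:ℝ)^(-(i:ℤ)) ≤ (m:ℝ)^(-(1:ℤ)) := by
      apply zpow_le_zpow_right₀ hM1; omega
    have hm1 : (m:ℝ)^(-(1:ℤ)) = 1/(m:ℝ) := by rw [zpow_neg, zpow_one, one_div]
    have harg : (m:ℝ)^(-(i:ℤ)) / (1 + ((m:ℝ) - 1) * x) ∈ Icc (0:ℝ) (1/(m:ℝ)) := by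
      constructor
      · positivity
      · calc (m:ℝ)^(-(i:ℤ)) / (1 + ((m:ℝ) - 1) * x) ≤ (m:ℝ)^(-(i:ℤ)) :=
              div_le_self hp.le hD
          _ ≤ 1/(m:ℝ) := hm1 ▸ hle
    rw [hf0 _ harg, mul_zero]
  rw [chanU, tsum_eq_single 0 hzero]
  simp only [Nat.cast_zero, neg_zero, zpow_zero]
  rcases eq_or_lt_of_le hx1 with h1 | h1
  · subst h1
    have : (1:ℝ) / (1 + ((m:ℝ) - 1) * 1) = 1/(m:ℝ) := by
      rw [div_eq_div_iff hD0.ne' hM0.ne']; ring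
    rw [this, hf0 _ ⟨by positivity, le_refl _⟩, mul_zero]
    simp [chanH2, Pi.sub_apply]
  · have harg : (1:ℝ) / (1 + ((m:ℝ) - 1) * x) ∈ Ioc (1/(m:ℝ)) 1 := by
      constructor
      · rw [div_lt_div_iff₀ hM0 hD0]; nlinarith
      · rw [div_le_one hD0]; exact hD
    rw [hf1 _ harg, mul_one]
    have h2 : chanH2 m x = 0 := if_neg (by linarith)
    rw [Pi.sub_apply, h2, sub_zero, chanP, chanH]
    have hMne : (m:ℝ) ≠ 0 := hM0.ne'
    have d1 : ((m:ℝ)-1)*x + ((m:ℝ)-1) + 1 ≠ 0 := by nlinarith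
    have d2 : ((m:ℝ)-1)*x + ((m:ℝ)-1)*(m:ℝ)⁻¹ + 1 ≠ 0 := by
      have h9 : (0:ℝ) ≤ ((m:ℝ)-1)*(m:ℝ)⁻¹ := mul_nonneg (by linarith) (by positivity)
      nlinarith
    have d3 : (m:ℝ)*((m:ℝ)-1)*x + (2*(m:ℝ)-1) ≠ 0 := by nlinarith
    simp only [Nat.cast_zero, neg_zero, zpow_zero, zero_add, mul_one, zpow_neg, zpow_one]
    rw [div_eq_div_iff (mul_ne_zero d1 d2) d3]
    field_simp
    ring

end

theorem chan_variation_bound_sharp (m : ℕ) (hm : 2 ≤ m) (f : ℝ → ℝ)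
    (hf0 : ∀ x ∈ Set.Icc (0:ℝ) (1/(m:ℝ)), f x = 0)
    (hf1 : ∀ x ∈ Set.Ioc (1/(m:ℝ)) 1, f x = 1) :
    eVariationOn (chanU m f) (Set.Icc (0:ℝ) 1) =
        ENNReal.ofReal (((m:ℝ) - 1) * (3*(m:ℝ)^2 - 3*(m:ℝ) + 1) /
          ((2*(m:ℝ) - 1) * ((m:ℝ)^2 + (m:ℝ) - 1))) ∧
      eVariationOn f (Set.Icc (0:ℝ) 1) = 1 := by
  have hM : (2:ℝ) ≤ (m:ℝ) := by exact_mod_cast hm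
  have hM0 : (0:ℝ) < m := by linarith
  constructor
  · rw [eVariationOn.eq_of_eqOn (chanU_eqOn hm f hf0 hf1)]
    have hsub : chanH m 0 ≤ chanH m 1 :=
      chanH_mono hm (left_mem_Icc.2 zero_le_one) (right_mem_Icc.2 zero_le_one) zero_le_one
    have h1nn : (0:ℝ) ≤ chanH m 1 := chanH_nonneg hm zero_le_one
    have hvarH : eVariationOn (chanH m) (Icc 0 1) = ENNReal.ofReal (chanH m 1 - chanH m 0) :=
      monotoneOn_evar zero_le_one (chanH_mono hm)
    have hvarH2 : eVariationOn (chanH2 m) (Icc 0 1) = ENNReal.ofReal (chanH m 1) := by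
      rw [monotoneOn_evar zero_le_one (chanH2_mono hm)]
      congr 1
      simp [chanH2]
    apply le_antisymm
    · calc eVariationOn (chanH m - chanH2 m) (Icc 0 1)
          ≤ eVariationOn (chanH m) (Icc 0 1) + eVariationOn (chanH2 m) (Icc 0 1) :=
            evar_sub_le _ _ _
        _ = ENNReal.ofReal ((chanH m 1 - chanH m 0) + chanH m 1) := by
            rw [hvarH, hvarH2, ← ENNReal.ofReal_add (sub_nonneg.2 hsub) h1nn]
        _ = _ := by rw [chan_key hm]
    · have key : ∀ t ∈ Ico (0:ℝ) 1,
          ENNReal.ofReal (chanH m t - chanH m 0) + ENNReal.ofReal (chanH m t) ≤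
            eVariationOn (chanH m - chanH2 m) (Icc 0 1) := by
        intro t ht
        set u : ℕ → ℝ := fun n => if n = 0 then 0 else if n = 1 then t else 1 with hu_def
        have hu : Monotone u := by
          intro i j hij
          simp only [hu_def]
          split_ifs <;> first | omega | linarith [ht.1, ht.2]
        have hus : ∀ i, u i ∈ Icc (0:ℝ) 1 := by
          intro i
          simp only [hu_def]
          split_ifs
          · exact ⟨le_rfl, zero_le_one⟩
          · exact ⟨ht.1, ht.2.le⟩
          · exact ⟨zero_le_one, le_rfl⟩
        have hsum := eVariationOn.sum_le (f := chanH m - chanH2 m) (n := 2) hu hus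
        rw [Finset.sum_range_succ, Finset.sum_range_one] at hsum
        have hu0 : u 0 = 0 := by simp [hu_def]
        have hu1 : u 1 = t := by simp [hu_def]
        have hu2 : u 2 = 1 := by simp [hu_def]
        rw [hu0, hu1, hu2] at hsum
        have hG0 : (chanH m - chanH2 m) 0 = chanH m 0 := by
          simp [chanH2, Pi.sub_apply]
        have hGt : (chanH m - chanH2 m) t = chanH m t := by
          have : chanH2 m t = 0 := if_neg (by linarith [ht.2])
          simp [Pi.sub_apply, this]
        have hG1 : (chanH m - chanH2 m) 1 = 0 := by
          simp [chanH2, Pi.sub_apply]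
        rw [hG0, hGt, hG1] at hsum
        have hmt : chanH m 0 ≤ chanH m t :=
          chanH_mono hm (left_mem_Icc.2 zero_le_one) ⟨ht.1, ht.2.le⟩ ht.1
        have htnn : (0:ℝ) ≤ chanH m t := (chanH_nonneg hm ht.1)
        have e1 : edist (chanH m t) (chanH m 0) = ENNReal.ofReal (chanH m t - chanH m 0) := by
          rw [real_edist, abs_of_nonneg (sub_nonneg.2 hmt)]
        have e2 : edist (0:ℝ) (chanH m t) = ENNReal.ofReal (chanH m t) := by
          rw [real_edist, zero_sub, abs_neg, abs_of_nonneg htnn]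
        rwa [e1, e2] at hsum
      have hcont : ContinuousAt (chanH m) 1 := by
        have : chanH m = fun x => (((m:ℝ)-1)*(((m:ℝ)-1)*x+1)) /
            ((m:ℝ)*((m:ℝ)-1)*x + (2*(m:ℝ)-1)) := rfl
        rw [this]
        exact ContinuousAt.div (by fun_prop) (by fun_prop)
          (chanH_den_pos hm zero_le_one).ne'
      have h1t : Filter.Tendsto (chanH m) (nhdsWithin 1 (Iio 1)) (nhds (chanH m 1)) :=
        hcont.continuousWithinAt.tendsto
      have htend : Filter.Tendsto
          (fun t => ENNReal.ofReal (chanH m t - chanH m 0) + ENNReal.ofReal (chanH m t))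
          (nhdsWithin 1 (Iio 1))
          (nhds (ENNReal.ofReal (chanH m 1 - chanH m 0) + ENNReal.ofReal (chanH m 1))) := by
        exact ((ENNReal.continuous_ofReal.tendsto _).comp (h1t.sub_const _)).add
          ((ENNReal.continuous_ofReal.tendsto _).comp h1t)
      have hev : ∀ᶠ t in nhdsWithin 1 (Iio 1),
          ENNReal.ofReal (chanH m t - chanH m 0) + ENNReal.ofReal (chanH m t) ≤
            eVariationOn (chanH m - chanH2 m) (Icc 0 1) := by
        filter_upwards [Ioo_mem_nhdsLT_of_mem (⟨zero_lt_one, le_rfl⟩ : (1:ℝ) ∈ Ioc 0 1)]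
          with t ht
        exact key t ⟨ht.1.le, ht.2⟩
      have hfin := le_of_tendsto htend hev
      calc ENNReal.ofReal (((m:ℝ) - 1) * (3*(m:ℝ)^2 - 3*(m:ℝ) + 1) /
              ((2*(m:ℝ) - 1) * ((m:ℝ)^2 + (m:ℝ) - 1)))
          = ENNReal.ofReal (chanH m 1 - chanH m 0) + ENNReal.ofReal (chanH m 1) := by
            rw [← chan_key hm, ENNReal.ofReal_add (sub_nonneg.2 hsub) h1nn]
        _ ≤ _ := hfin
  · have hmono : MonotoneOn f (Icc (0:ℝ) 1) := by
      intro x hx y hy hxy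
      by_cases hy' : y ≤ 1/(m:ℝ)
      · rw [hf0 x ⟨hx.1, hxy.trans hy'⟩, hf0 y ⟨hy.1, hy'⟩]
      · push_neg at hy'
        rw [hf1 y ⟨hy', hy.2⟩]
        by_cases hx' : x ≤ 1/(m:ℝ)
        · rw [hf0 x ⟨hx.1, hx'⟩]; norm_num
        · push_neg at hx'
          rw [hf1 x ⟨hx', hx.2⟩]
    rw [monotoneOn_evar zero_le_one hmono,
      hf1 1 ⟨by rw [div_lt_one hM0]; linarith, le_rfl⟩,
      hf0 0 ⟨le_rfl, by positivity⟩]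
    norm_num
end
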